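/- arXiv:1804.01381 — 3 statements merged into one kernel-verified Lean document; each statement's English description precedes it below -/
import Mathlib

section
/- Let K be a field and R = K[x_1,...,x_n]. If I is an ideal of R generated by a finite set B of polynomials such that for every pair of distinct elements f, g in B the leading monomials of f and g (with respect to a fixed monomial order) are relatively prime, then B is a Gröbner basis of I, i.e. the ideal generated by the leading terms of elements of I equals the ideal generated by the leading terms of elements of B. -/
open MvPolynomial

/-- The leading exponent (multidegree) of a multivariate polynomial with respect to a
monomial order. -/
noncomputable def MonomialOrder.lexp {σ : Type*} (m : MonomialOrder σ) {K : Type*}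
    [CommSemiring K] (f : MvPolynomial σ K) : σ →₀ ℕ :=
  m.toSyn.symm (f.support.sup fun d => m.toSyn d)

/-- The leading term of a multivariate polynomial with respect to a monomial order. -/
noncomputable def MonomialOrder.leadTerm {σ : Type*} (m : MonomialOrder σ) {K : Type*}
    [CommSemiring K] (f : MvPolynomial σ K) : MvPolynomial σ K :=
  monomial (m.lexp f) (f.coeff (m.lexp f))

/-- `G` is a Gröbner basis of the ideal `I`: `G ⊆ I` and the ideal generated by the
leading terms of elements of `I` equals the ideal generated by the leading terms of `G`. -/
def MonomialOrder.IsGroebnerBasis {σ : Type*} (m : MonomialOrder σ) {K : Type*} [Field K]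
    (I : Ideal (MvPolynomial σ K)) (G : Set (MvPolynomial σ K)) : Prop :=
  G ⊆ (I : Set (MvPolynomial σ K)) ∧
    Ideal.span (m.leadTerm '' (I : Set (MvPolynomial σ K))) =
      Ideal.span (m.leadTerm '' G)


/-!
Write `f ∈ ⟨B⟩` as `∑ g ∈ B, h g * g` and choose the representation minimising first the top
degree `δ = max deg (h g * g)` and then the number of summands of degree `δ`. If two summands
`h gᵢ * gᵢ` and `h gⱼ * gⱼ` reach `δ`, then `LM(gⱼ) ∣ LM(h gᵢ)` because `LM(gᵢ)` and `LM(gⱼ)`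
are coprime, and adding a multiple of the Koszul syzygy `gᵢ eⱼ - gⱼ eᵢ` cancels the leading
term of `h gᵢ * gᵢ` without creating a new summand of degree `δ`. Hence in a minimal
representation exactly one summand `h g * g` reaches `δ`, so `LM(f) = LM(h g) LM(g)`.
-/

theorem Finsupp.le_of_add_eq_add_of_coprime {σ : Type*} {a b c d : σ →₀ ℕ}
    (hbd : ∀ i, b i = 0 ∨ d i = 0) (h : a + b = c + d) : d ≤ a := fun i => by
  have hi := DFunLike.congr_fun h i
  simp only [Finsupp.coe_add, Pi.add_apply] at hi
  rcases hbd i with hb | hd <;> omega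

def koszulSyzygy {R : Type*} [Ring R] [DecidableEq R] (f g : R) : R → R :=
  Pi.single g f - Pi.single f g

theorem sum_koszulSyzygy_mul {R : Type*} [CommRing R] [DecidableEq R] {s : Finset R} {f g : R}
    (hf : f ∈ s) (hg : g ∈ s) : ∑ b ∈ s, koszulSyzygy f g b * b = 0 := by
  simp only [koszulSyzygy, Pi.sub_apply, sub_mul, Finset.sum_sub_distrib, Pi.single_apply,
    ite_mul, zero_mul, Finset.sum_ite_eq', hf, hg, if_true]
  exact sub_eq_zero.mpr (mul_comm f g)

namespace MonomialOrder

open scoped MonomialOrder Finset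

section CommSemiring

variable {σ R : Type*} [CommSemiring R] {m : MonomialOrder σ}

theorem lexp_eq_degree (f : MvPolynomial σ R) : m.lexp f = m.degree f := rfl

theorem leadTerm_eq_leadingTerm (f : MvPolynomial σ R) : m.leadTerm f = m.leadingTerm f := rfl

variable (m) in
/-- `h` encodes the representation `∑ g ∈ B, h g * g`; this is the largest degree of its
summands, `⊥` when they all vanish. -/
noncomputable def maxSummandDegree (B : Finset (MvPolynomial σ R))
    (h : MvPolynomial σ R → MvPolynomial σ R) : WithBot m.syn :=
  B.sup fun g => m.toWithBotSyn (m.withBotDegree (h g * g))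

variable (m) in
noncomputable def topSummands (B : Finset (MvPolynomial σ R))
    (h : MvPolynomial σ R → MvPolynomial σ R) : Finset (MvPolynomial σ R) :=
  B.filter fun g => m.toWithBotSyn (m.withBotDegree (h g * g)) = maxSummandDegree m B h

variable (m) in
noncomputable def representationRank (B : Finset (MvPolynomial σ R))
    (h : MvPolynomial σ R → MvPolynomial σ R) : WithBot m.syn ×ₗ ℕ :=
  toLex (maxSummandDegree m B h, #(topSummands m B h))

theorem maxSummandDegree_ne_bot {B : Finset (MvPolynomial σ R)}
    {h : MvPolynomial σ R → MvPolynomial σ R} (hf : ∑ g ∈ B, h g * g ≠ 0) :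
    maxSummandDegree m B h ≠ ⊥ :=
  ne_bot_of_le_ne_bot (by simpa using hf) withBotDegree_sum_le

theorem representationRank_lt {B : Finset (MvPolynomial σ R)}
    {h h' : MvPolynomial σ R → MvPolynomial σ R} {gi gj : MvPolynomial σ R}
    (hgi : gi ∈ topSummands m B h) (hgj : gj ∈ topSummands m B h)
    (hgi' : m.toWithBotSyn (m.withBotDegree (h' gi * gi)) < maxSummandDegree m B h)
    (hgj' : m.toWithBotSyn (m.withBotDegree (h' gj * gj)) ≤ maxSummandDegree m B h)
    (hh' : ∀ g, g ≠ gi → g ≠ gj → h' g = h g) :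
    representationRank m B h' < representationRank m B h := by
  classical
  have hle : maxSummandDegree m B h' ≤ maxSummandDegree m B h := by
    refine Finset.sup_le fun g hg => ?_
    by_cases hi : g = gi
    · exact hi ▸ hgi'.le
    by_cases hj : g = gj
    · exact hj ▸ hgj'
    · rw [hh' g hi hj]
      exact Finset.le_sup (f := fun b => m.toWithBotSyn (m.withBotDegree (h b * b))) hg
  refine Prod.Lex.toLex_lt_toLex.mpr ?_
  obtain hlt | heq := hle.lt_or_eq
  · exact Or.inl hlt
  refine Or.inr ⟨heq, (Finset.card_le_card fun g hg => ?_).trans_lt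
    (Finset.card_erase_lt_of_mem hgi)⟩
  obtain ⟨hgB, hgδ⟩ := Finset.mem_filter.mp hg
  have hi : g ≠ gi := by rintro rfl; exact hgi'.ne (hgδ.trans heq)
  refine Finset.mem_erase.mpr ⟨hi, ?_⟩
  by_cases hj : g = gj
  · exact hj ▸ hgj
  · exact Finset.mem_filter.mpr ⟨hgB, hh' g hi hj ▸ hgδ.trans heq⟩

end CommSemiring

section CommRing

variable {σ R : Type*} [CommRing R] {m : MonomialOrder σ}

theorem withBotDegree_reduce_lt {f b : MvPolynomial σ R} (hb : IsUnit (m.leadingCoeff b))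
    (hbf : m.degree b ≤ m.degree f) (hf : f ≠ 0) :
    m.withBotDegree (m.reduce hb f) ≺'[m] m.withBotDegree f := by
  rw [withBotDegree_lt_withBotDegree_iff]
  by_cases hf0 : m.degree f = 0
  · have hb0 : m.degree b = 0 := nonpos_iff_eq_zero.mp (hf0 ▸ hbf)
    refine Or.inr ⟨?_, hf⟩
    have hbC : b = C (hb.unit : R) := by rw [hb.unit_spec]; exact eq_C_of_degree_eq_zero hb0
    rw [reduce]
    generalize hb.unit = u at hbC ⊢
    rw [hf0, hb0, tsub_zero, monomial_zero', hbC, ← C_mul, mul_comm,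
      Units.mul_inv_cancel_left, ← eq_C_of_degree_eq_zero hf0, sub_self]
  · exact Or.inl (degree_reduce_lt hb hbf hf0)

end CommRing

section Field

variable {σ K : Type*} [Field K] {m : MonomialOrder σ}

theorem leadingTerm_dvd_leadingTerm {f g : MvPolynomial σ K} (hg : g ≠ 0)
    (hgf : m.degree g ≤ m.degree f) : m.leadingTerm g ∣ m.leadingTerm f :=
  ⟨monomial (m.degree f - m.degree g) (m.leadingCoeff f / m.leadingCoeff g), by
    rw [leadingTerm, leadingTerm, monomial_mul, add_tsub_cancel_of_le hgf,
      mul_div_cancel₀ _ (m.leadingCoeff_ne_zero_iff.mpr hg)]⟩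

theorem exists_withBotDegree_sub_mul_lt_of_coprime {a b c d : MvPolynomial σ K}
    (hbd : ∀ i, m.degree b i = 0 ∨ m.degree d i = 0) (hab : a * b ≠ 0)
    (hdeg : m.withBotDegree (a * b) = m.withBotDegree (c * d)) :
    ∃ q, m.withBotDegree ((a - q * d) * b) ≺'[m] m.withBotDegree (a * b) ∧
      m.withBotDegree ((c + q * b) * d) ≼'[m] m.withBotDegree (a * b) := by
  obtain ⟨hdeg', hcd⟩ := m.withBotDegree_eq_withBotDegree_iff _ _ |>.mp hdeg
  replace hcd : c * d ≠ 0 := hcd.not.mp hab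
  obtain ⟨ha, hb⟩ := mul_ne_zero_iff.mp hab
  obtain ⟨hc, hd⟩ := mul_ne_zero_iff.mp hcd
  have hda : m.degree d ≤ m.degree a := Finsupp.le_of_add_eq_add_of_coprime hbd
    (by rwa [degree_mul ha hb, degree_mul hc hd] at hdeg')
  have hu : IsUnit (m.leadingCoeff d) := (m.leadingCoeff_ne_zero_iff.mpr hd).isUnit
  set q := monomial (m.degree a - m.degree d) (hu.unit⁻¹ * m.leadingCoeff a)
  have hqd : m.withBotDegree (q * d) = m.withBotDegree a := by
    classical
    have hq0 : hu.unit⁻¹ * m.leadingCoeff a ≠ 0 := by simp [ha, hd]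
    rw [withBotDegree_mul, withBotDegree_monomial, if_neg hq0,
      (m.withBotDegree_eq_coe_degree_iff d).mpr hd, (m.withBotDegree_eq_coe_degree_iff a).mpr ha,
      ← WithBot.coe_add, tsub_add_cancel_of_le hda]
  refine ⟨q, ?_, ?_⟩
  · change m.withBotDegree (m.reduce hu a * b) ≺'[m] _
    rw [withBotDegree_mul, withBotDegree_mul, map_add, map_add]
    exact WithBot.add_lt_add_right (by simpa using hb) (withBotDegree_reduce_lt hu hda ha)
  · calc m.toWithBotSyn (m.withBotDegree ((c + q * b) * d))
        = m.toWithBotSyn (m.withBotDegree (c * d + q * d * b)) := by ring_nf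
      _ ≤ _ := withBotDegree_add_le _ _
      _ = m.toWithBotSyn (m.withBotDegree (a * b)) := by
        rw [withBotDegree_mul (q * d), hqd, ← withBotDegree_mul, ← hdeg, max_self]

theorem exists_degree_le_degree_sum {B : Finset (MvPolynomial σ K)}
    {h : MvPolynomial σ K → MvPolynomial σ K} (hcard : #(topSummands m B h) ≤ 1)
    (hf : ∑ g ∈ B, h g * g ≠ 0) :
    ∃ g ∈ B, g ≠ 0 ∧ m.degree g ≤ m.degree (∑ b ∈ B, h b * b) := by
  classical
  have hδ : ⊥ < maxSummandDegree m B h := bot_lt_iff_ne_bot.mpr (maxSummandDegree_ne_bot hf)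
  obtain ⟨g, hgB, hgδ⟩ := B.exists_mem_eq_sup
    (Finset.nonempty_iff_ne_empty.mpr (by rintro rfl; exact hδ.ne rfl))
    fun b => m.toWithBotSyn (m.withBotDegree (h b * b))
  have hg_top : g ∈ topSummands m B h := Finset.mem_filter.mpr ⟨hgB, hgδ.symm⟩
  have hrest : m.withBotDegree (∑ b ∈ B.erase g, h b * b) ≺'[m] m.withBotDegree (h g * g) := by
    have hlt : (B.erase g).sup (fun b => m.toWithBotSyn (m.withBotDegree (h b * b))) <
        maxSummandDegree m B h := by
      refine (Finset.sup_lt_iff hδ).mpr fun b hb => ?_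
      refine (Finset.le_sup (f := fun b => m.toWithBotSyn (m.withBotDegree (h b * b)))
        (Finset.mem_of_mem_erase hb)).lt_of_ne fun hbδ => ?_
      exact Finset.ne_of_mem_erase hb <| Finset.card_le_one.mp hcard b
        (Finset.mem_filter.mpr ⟨Finset.mem_of_mem_erase hb, hbδ⟩) g hg_top
    rw [maxSummandDegree, hgδ] at hlt
    exact withBotDegree_sum_le.trans_lt hlt
  have hfg : m.withBotDegree (∑ b ∈ B, h b * b) = m.withBotDegree (h g * g) := by
    rw [← Finset.add_sum_erase B _ hgB]
    exact withBotDegree_add_of_lt hrest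
  obtain ⟨hdeg, hzero⟩ := (m.withBotDegree_eq_withBotDegree_iff _ _).mp hfg
  obtain ⟨hh, hg⟩ := mul_ne_zero_iff.mp (hzero.not.mp hf)
  exact ⟨g, hgB, hg, hdeg ▸ degree_mul hh hg ▸ le_add_self⟩

theorem exists_representationRank_lt {B : Finset (MvPolynomial σ K)}
    (hB : ∀ f ∈ B, ∀ g ∈ B, f ≠ g → ∀ i, m.degree f i = 0 ∨ m.degree g i = 0)
    {h : MvPolynomial σ K → MvPolynomial σ K} (hδ : maxSummandDegree m B h ≠ ⊥)
    (hcard : 1 < #(topSummands m B h)) :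
    ∃ h', ∑ g ∈ B, h' g * g = ∑ g ∈ B, h g * g ∧
      representationRank m B h' < representationRank m B h := by
  classical
  obtain ⟨gi, hgi, gj, hgj, hne⟩ := Finset.one_lt_card.mp hcard
  obtain ⟨hgiB, hgiδ⟩ := Finset.mem_filter.mp hgi
  obtain ⟨hgjB, hgjδ⟩ := Finset.mem_filter.mp hgj
  obtain ⟨q, hq_lt, hq_le⟩ := exists_withBotDegree_sub_mul_lt_of_coprime
    (hB gi hgiB gj hgjB hne) (fun h0 => hδ (by simpa [h0] using hgiδ.symm))
    (m.toWithBotSyn.injective (hgiδ.trans hgjδ.symm))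
  refine ⟨h + q • koszulSyzygy gi gj, ?_, representationRank_lt hgi hgj ?_ ?_ ?_⟩
  · simp only [Pi.add_apply, Pi.smul_apply, smul_eq_mul, add_mul, mul_assoc,
      Finset.sum_add_distrib, ← Finset.mul_sum, sum_koszulSyzygy_mul hgiB hgjB, mul_zero, add_zero]
  · simpa [koszulSyzygy, hne, sub_eq_add_neg] using hq_lt.trans_eq hgiδ
  · simpa [koszulSyzygy, hne.symm] using hq_le.trans_eq hgiδ
  · intro g hi hj
    simp [koszulSyzygy, hi, hj]

theorem exists_degree_le_of_mem_span {B : Finset (MvPolynomial σ K)}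
    (hB : ∀ f ∈ B, ∀ g ∈ B, f ≠ g → ∀ i, m.degree f i = 0 ∨ m.degree g i = 0)
    {f : MvPolynomial σ K} (hf : f ∈ Ideal.span (B : Set (MvPolynomial σ K))) (hf0 : f ≠ 0) :
    ∃ g ∈ B, g ≠ 0 ∧ m.degree g ≤ m.degree f := by
  obtain ⟨h₀, -, hh₀⟩ := Submodule.mem_span_finset.mp hf
  obtain ⟨h, hsum, hmin⟩ := (InvImage.wf (representationRank m B) wellFounded_lt).has_min
    {h | ∑ g ∈ B, h g * g = f} ⟨h₀, hh₀⟩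
  subst hsum
  have hcard : #(topSummands m B h) ≤ 1 := by
    by_contra! hcard
    obtain ⟨h', hsum', hlt⟩ :=
      exists_representationRank_lt hB (maxSummandDegree_ne_bot hf0) hcard
    exact hmin h' hsum' hlt
  exact exists_degree_le_degree_sum hcard hf0

end Field

end MonomialOrder

/-- If the leading monomials of every pair of distinct elements of a finite basis `B`
are relatively prime, then `B` is a Gröbner basis of the ideal it generates. -/
theorem groebner_of_pairwise_relatively_prime_leading_monomials
    {σ K : Type*} [Field K] (m : MonomialOrder σ)
    (B : Finset (MvPolynomial σ K))
    (hprime : ∀ f ∈ B, ∀ g ∈ B, f ≠ g → ∀ i : σ, m.lexp f i = 0 ∨ m.lexp g i = 0) :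
    m.IsGroebnerBasis (Ideal.span (B : Set (MvPolynomial σ K))) (B : Set (MvPolynomial σ K)) := by
  simp only [MonomialOrder.lexp_eq_degree] at hprime
  refine ⟨Ideal.subset_span,
    le_antisymm ?_ (Ideal.span_mono (Set.image_mono Ideal.subset_span))⟩
  rw [Ideal.span_le]
  rintro _ ⟨f, hf, rfl⟩
  rw [MonomialOrder.leadTerm_eq_leadingTerm]
  obtain rfl | hf0 := eq_or_ne f 0
  · rw [MonomialOrder.leadingTerm_zero]
    exact zero_mem _
  obtain ⟨g, hgB, hg0, hgf⟩ := MonomialOrder.exists_degree_le_of_mem_span hprime hf hf0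
  exact Ideal.mem_of_dvd _ (MonomialOrder.leadingTerm_dvd_leadingTerm hg0 hgf)
    (Ideal.subset_span ⟨g, hgB, MonomialOrder.leadTerm_eq_leadingTerm g⟩)
end

section
/- Let K be a field, I = ⟨f_0, f_1,...,f_s⟩ ⊆ K[y, x_1,...,x_n] with f_1,...,f_s ∈ K[x_1,...,x_n] and f_0 = y + f_0', f_0' ∈ K[x_1,...,x_n]. Fix a monomial order in which y is greater than any monomial in x_1,...,x_n. Then for a subset G ⊆ K[x_1,...,x_n], G is a Gröbner basis of ⟨f_1,...,f_s⟩ if and only if {f_0} ∪ G is a Gröbner basis of I. -/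
open MvPolynomial
open scoped MonomialOrder

/-! Substituting `-f₀'` for `y` fixes `K[x]` and kills `f₀`, so a `y`-free element of `I` already
lies in `J = ⟨f₁, …, f_s⟩`. Since `y` beats every `x`-monomial, a polynomial whose leading
monomial is free of `y` is itself free of `y`, and the leading term of `f₀` is `y`; hence
`⟨LT(I)⟩ = ⟨y, LT(J)⟩`. As `J` is generated by `y`-free polynomials, the coefficient `q` of `y^k` of
any `p ∈ J` lies in `J` again; for `k` the `y`-degree of the leading monomial of `p` this gives
`LT(p) = y^k LT(q)`, and setting `y = 0` turns `LT(q) ∈ ⟨y, LT(G)⟩` into `LT(q) ∈ ⟨LT(G)⟩`. -/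

-- `leadTerm` is definitionally Mathlib's `MonomialOrder.leadingTerm`.
lemma MonomialOrder.isGroebnerBasis_iff {σ K : Type*} [Field K] (m : MonomialOrder σ)
    (I : Ideal (MvPolynomial σ K)) (G : Set (MvPolynomial σ K)) :
    m.IsGroebnerBasis I G ↔ G ⊆ I ∧
      Ideal.span (m.leadingTerm '' (I : Set (MvPolynomial σ K))) =
        Ideal.span (m.leadingTerm '' G) := Iff.rfl

namespace MvPolynomial

section Vars

variable {τ R : Type*}

lemma notMem_vars_iff_forall_mem_support [CommSemiring R] {p : MvPolynomial τ R} {j : τ} :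
    j ∉ p.vars ↔ ∀ d ∈ p.support, d j = 0 := by
  simp [mem_vars_iff_mem_support]

lemma aeval_update_X_eq_self [CommSemiring R] [DecidableEq τ] {j : τ} (c : MvPolynomial τ R)
    {p : MvPolynomial τ R} (hp : j ∉ p.vars) : aeval (Function.update X j c) p = p :=
  calc aeval (Function.update X j c) p
      = aeval X p := eval₂Hom_congr' rfl
        (fun _ hi _ => Function.update_of_ne (ne_of_mem_of_not_mem hi hp) _ _) rfl
    _ = p := aeval_X_left_apply p

/-- Substituting `-a` for `X j` kills `X j + a` and fixes every polynomial not involving `X j`. -/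
lemma mem_span_of_mem_span_insert_X_add [CommRing R] {j : τ} {a p : MvPolynomial τ R}
    {S : Set (MvPolynomial τ R)} (ha : j ∉ a.vars) (hp : j ∉ p.vars) (hS : ∀ g ∈ S, j ∉ g.vars)
    (h : p ∈ Ideal.span (insert (X j + a) S)) : p ∈ Ideal.span S := by
  classical
  let φ : MvPolynomial τ R →ₐ[R] MvPolynomial τ R := aeval (Function.update X j (-a))
  have hφ : φ p ∈ Ideal.span (φ '' insert (X j + a) S) := by
    rw [← Ideal.map_span]
    exact Ideal.mem_map_of_mem φ h
  rw [aeval_update_X_eq_self _ hp] at hφ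
  refine Ideal.span_le.mpr ?_ hφ
  rintro - ⟨g, hg | hg, rfl⟩
  · rw [hg, map_add, aeval_X, Function.update_self, aeval_update_X_eq_self _ ha, neg_add_cancel]
    exact Ideal.zero_mem _
  · rw [aeval_update_X_eq_self _ (hS g hg)]
    exact Ideal.subset_span hg

lemma vars_leadingTerm_subset [CommSemiring R] (m : MonomialOrder τ) (p : MvPolynomial τ R) :
    (m.leadingTerm p).vars ⊆ p.vars := by
  classical
  intro j hj
  rw [mem_vars_iff_mem_support] at hj ⊢
  obtain ⟨d, hd, hjd⟩ := hj
  rw [m.support_leadingTerm] at hd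
  split_ifs at hd with hp
  · simp at hd
  · rw [Finset.mem_singleton.mp hd] at hjd
    exact ⟨_, m.degree_mem_support hp, hjd⟩

end Vars

section Option

variable {σ R : Type*} [CommSemiring R]

lemma _root_.Finsupp.mapDomain_some_add_single_none (u : σ →₀ ℕ) (k : ℕ) :
    u.mapDomain some + Finsupp.single none k = u.optionElim k := by
  ext (_ | i)
  · simp [Finsupp.mapDomain_of_notMem_range]
  · simp [Finsupp.mapDomain_apply (Option.some_injective σ)]

lemma optionEquivLeft_rename_some (q : MvPolynomial σ R) :
    optionEquivLeft R σ (rename some q) = Polynomial.C q := by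
  have : (optionEquivLeft R σ).toAlgHom.comp (rename some) = Polynomial.CAlgHom := by
    ext i
    simp [optionEquivLeft_X_some, Polynomial.CAlgHom]
  exact DFunLike.congr_fun this q

/-- The coefficient of `X none ^ k` in `p`, a polynomial in the variables `X (some i)`. -/
noncomputable def coeffNone (k : ℕ) (p : MvPolynomial (Option σ) R) : MvPolynomial (Option σ) R :=
  rename some ((optionEquivLeft R σ p).coeff k)

lemma coeff_mapDomain_some_coeffNone (k : ℕ) (p : MvPolynomial (Option σ) R) (u : σ →₀ ℕ) :
    (coeffNone k p).coeff (u.mapDomain some) = p.coeff (u.optionElim k) := by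
  rw [coeffNone, coeff_rename_mapDomain _ (Option.some_injective σ), optionEquivLeft_coeff_coeff]

lemma none_notMem_vars_coeffNone (k : ℕ) (p : MvPolynomial (Option σ) R) :
    none ∉ (coeffNone k p).vars := fun h => by
  obtain ⟨i, -, hi⟩ := mem_vars_rename _ _ h
  exact Option.some_ne_none i hi

lemma coeffNone_mul_of_none_notMem_vars (k : ℕ) (a : MvPolynomial (Option σ) R)
    {g : MvPolynomial (Option σ) R} (hg : none ∉ g.vars) :
    coeffNone k (a * g) = coeffNone k a * g := by
  obtain ⟨g, rfl⟩ := exists_rename_eq_of_vars_subset_range g some (Option.some_injective σ)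
    fun i hi => Option.ne_none_iff_exists.mp (ne_of_mem_of_not_mem hi hg)
  simp [coeffNone, optionEquivLeft_rename_some]

lemma coeffNone_sum {ι : Type*} (k : ℕ) (s : Finset ι) (g : ι → MvPolynomial (Option σ) R) :
    coeffNone k (∑ i ∈ s, g i) = ∑ i ∈ s, coeffNone k (g i) := by
  simp only [coeffNone, map_sum, Polynomial.finsetSum_coeff]

lemma coeffNone_mem_span_range {ι : Type*} {f : ι → MvPolynomial (Option σ) R}
    (hf : ∀ i, none ∉ (f i).vars) (k : ℕ) {p : MvPolynomial (Option σ) R}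
    (hp : p ∈ Ideal.span (Set.range f)) : coeffNone k p ∈ Ideal.span (Set.range f) := by
  obtain ⟨c, rfl⟩ := Finsupp.mem_ideal_span_range_iff_exists_finsupp.mp hp
  rw [Finsupp.sum, coeffNone_sum]
  exact Ideal.sum_mem _ fun i _ => by
    rw [coeffNone_mul_of_none_notMem_vars _ _ (hf i)]
    exact Ideal.mul_mem_left _ _ (Ideal.subset_span ⟨i, rfl⟩)

end Option

section MonomialOrder

variable {σ R : Type*}

lemma degree_apply_eq_zero_of_notMem_vars [CommSemiring R] (m : MonomialOrder σ)
    {p : MvPolynomial σ R} {j : σ} (hp : j ∉ p.vars) : m.degree p j = 0 := by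
  rcases eq_or_ne p 0 with rfl | hp0
  · simp [m.degree_zero]
  · exact notMem_vars_iff_forall_mem_support.mp hp _ (m.degree_mem_support hp0)

lemma leadingTerm_eq_X_none_pow_mul_leadingTerm_coeffNone [CommSemiring R]
    (m : MonomialOrder (Option σ)) (p : MvPolynomial (Option σ) R) :
    m.leadingTerm p =
      X none ^ m.degree p none * m.leadingTerm (coeffNone (m.degree p none) p) := by
  classical
  set k := m.degree p none
  set q := coeffNone k p
  set D := (m.degree p).some.mapDomain some
  rcases eq_or_ne p 0 with rfl | hp
  · simp [q, coeffNone]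
  have hdeg : D + Finsupp.single none k = m.degree p := by
    rw [Finsupp.mapDomain_some_add_single_none, Finsupp.optionElim_some]
  have hcoeff : q.coeff D = m.leadingCoeff p := by
    rw [coeff_mapDomain_some_coeffNone, Finsupp.optionElim_some]
    rfl
  have hdegq : m.degree q = D := by
    refine m.toSyn.injective (le_antisymm (m.degree_le_iff.mpr fun u hu => ?_)
      (m.le_degree (mem_support_iff.mpr (hcoeff ▸ m.leadingCoeff_ne_zero_iff.mpr hp))))
    have hu_image := hu
    rw [show q = rename some _ from rfl,
      support_rename_of_injective (Option.some_injective σ)] at hu_image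
    obtain ⟨u, -, rfl⟩ := Finset.mem_image.mp hu_image
    have hu' : u.optionElim k ∈ p.support := by
      rwa [mem_support_iff, ← coeff_mapDomain_some_coeffNone, ← mem_support_iff]
    have := m.le_degree hu'
    rw [← Finsupp.mapDomain_some_add_single_none, ← hdeg, map_add, map_add] at this
    exact le_of_add_le_add_right this
  have hlc : m.leadingCoeff q = m.leadingCoeff p := (congrArg q.coeff hdegq).trans hcoeff
  rw [MonomialOrder.leadingTerm, MonomialOrder.leadingTerm, hdegq, hlc, X_pow_eq_monomial,
    monomial_mul, one_mul, add_comm, hdeg]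

lemma none_notMem_vars_of_degree_none_eq_zero [CommSemiring R] {m : MonomialOrder (Option σ)}
    (hy : ∀ a : Option σ →₀ ℕ, a none = 0 → a ≺[m] Finsupp.single none 1)
    {p : MvPolynomial (Option σ) R} (h : m.degree p none = 0) : none ∉ p.vars := by
  rw [notMem_vars_iff_forall_mem_support]
  intro d hd
  by_contra hdn
  have hyd : Finsupp.single none 1 ≼[m] d :=
    m.toSyn_monotone (Finsupp.single_le_iff.mpr (Nat.one_le_iff_ne_zero.mpr hdn))
  exact (hyd.trans (m.le_degree hd)).not_gt (hy _ h)

lemma leadingTerm_X_none_add [CommSemiring R] [Nontrivial R] {m : MonomialOrder (Option σ)}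
    (hy : ∀ a : Option σ →₀ ℕ, a none = 0 → a ≺[m] Finsupp.single none 1)
    {a : MvPolynomial (Option σ) R} (ha : none ∉ a.vars) :
    m.leadingTerm (X none + a) = X none := by
  have hlt : m.degree a ≺[m] m.degree (X none : MvPolynomial (Option σ) R) := by
    rw [m.degree_X]
    exact hy _ (degree_apply_eq_zero_of_notMem_vars m ha)
  rw [MonomialOrder.leadingTerm, m.degree_add_of_lt hlt, m.leadingCoeff_add_of_lt hlt,
    m.leadingCoeff_X, m.degree_X]
  rfl

end MonomialOrder

section LeadingTermIdeal

variable {σ R ι : Type*} [CommRing R] {m : MonomialOrder (Option σ)}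
  {f : ι → MvPolynomial (Option σ) R}

lemma span_leadingTerm_span_insert_X_none_add [Nontrivial R]
    (hy : ∀ a : Option σ →₀ ℕ, a none = 0 → a ≺[m] Finsupp.single none 1)
    {a : MvPolynomial (Option σ) R} (ha : none ∉ a.vars) (hf : ∀ i, none ∉ (f i).vars) :
    Ideal.span (m.leadingTerm ''
        (Ideal.span (insert (X none + a) (Set.range f)) : Set (MvPolynomial (Option σ) R))) =
      Ideal.span (insert (X none)
        (m.leadingTerm '' (Ideal.span (Set.range f) : Set (MvPolynomial (Option σ) R)))) := by
  have hJI : Ideal.span (Set.range f) ≤ Ideal.span (insert (X none + a) (Set.range f)) :=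
    Ideal.span_mono (Set.subset_insert _ _)
  apply le_antisymm
  · rw [Ideal.span_le]
    rintro - ⟨p, hp, rfl⟩
    by_cases hk : m.degree p none = 0
    · have hpJ : p ∈ Ideal.span (Set.range f) :=
        mem_span_of_mem_span_insert_X_add ha (none_notMem_vars_of_degree_none_eq_zero hy hk)
          (Set.forall_mem_range.mpr hf) hp
      exact Ideal.subset_span (Set.mem_insert_of_mem _ ⟨p, hpJ, rfl⟩)
    · rw [leadingTerm_eq_X_none_pow_mul_leadingTerm_coeffNone]
      exact Ideal.mul_mem_right _ _ (Ideal.pow_mem_of_mem _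
        (Ideal.subset_span (Set.mem_insert _ _)) _ (Nat.pos_of_ne_zero hk))
  · rw [Ideal.span_le, Set.insert_subset_iff]
    refine ⟨?_, (Set.image_mono hJI).trans Ideal.subset_span⟩
    exact Ideal.subset_span
      ⟨_, Ideal.subset_span (Set.mem_insert _ _), leadingTerm_X_none_add hy ha⟩

lemma span_leadingTerm_le_of_subset_span_insert_X_none
    {G : Set (MvPolynomial (Option σ) R)} (hf : ∀ i, none ∉ (f i).vars)
    (hG : ∀ g ∈ G, none ∉ g.vars)
    (h : m.leadingTerm '' (Ideal.span (Set.range f) : Set (MvPolynomial (Option σ) R)) ⊆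
      (Ideal.span (insert (X none) (m.leadingTerm '' G)) : Set (MvPolynomial (Option σ) R))) :
    Ideal.span (m.leadingTerm '' (Ideal.span (Set.range f) : Set (MvPolynomial (Option σ) R))) ≤
      Ideal.span (m.leadingTerm '' G) := by
  rw [Ideal.span_le]
  rintro - ⟨p, hp, rfl⟩
  rw [leadingTerm_eq_X_none_pow_mul_leadingTerm_coeffNone]
  refine Ideal.mul_mem_left _ _ ?_
  have hq := coeffNone_mem_span_range hf (m.degree p none) hp
  have hq_vars := none_notMem_vars_coeffNone (m.degree p none) p
  refine mem_span_of_mem_span_insert_X_add (a := 0) (by simp)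
    (fun h' => hq_vars (vars_leadingTerm_subset m _ h')) ?_ (by simpa using h ⟨_, hq, rfl⟩)
  rintro - ⟨g, hg, rfl⟩ h'
  exact hG g hg (vars_leadingTerm_subset m g h')

end LeadingTermIdeal

end MvPolynomial

/-- Lemma 2.1, second part.  The polynomial ring is `K[y, x₁, …]`, modelled as
`MvPolynomial (Option σ) K` with `y = X none`.  With `I = ⟨f₀, f₁, …, f_s⟩`,
`f₀ = y + f₀'`, all `fᵢ` and `f₀'` not involving `y`, and a monomial order in which `y`
is greater than every monomial in the `x`-variables: a subset `G` of `K[x]` is a Gröbner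
basis of `⟨f₁,…,f_s⟩` if and only if `{f₀} ∪ G` is a Gröbner basis of `I`. -/
theorem groebner_iff_groebner_insert_linear_variable
    {σ K : Type*} [Field K] (m : MonomialOrder (Option σ)) {s : ℕ}
    (f : Fin s → MvPolynomial (Option σ) K) (f₀' : MvPolynomial (Option σ) K)
    (hf : ∀ i, ∀ d ∈ (f i).support, d none = 0)
    (hf₀' : ∀ d ∈ f₀'.support, d none = 0)
    (horder : ∀ a : Option σ →₀ ℕ, a none = 0 → a ≺[m] Finsupp.single (none : Option σ) 1)
    (f₀ : MvPolynomial (Option σ) K) (hf₀ : f₀ = X none + f₀')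
    (I : Ideal (MvPolynomial (Option σ) K))
    (hI : I = Ideal.span ({f₀} ∪ Set.range f))
    (G : Set (MvPolynomial (Option σ) K))
    (hG : ∀ g ∈ G, ∀ d ∈ g.support, d none = 0) :
    m.IsGroebnerBasis (Ideal.span (Set.range f)) G ↔
      m.IsGroebnerBasis I ({f₀} ∪ G) := by
  subst hf₀ hI
  replace hf i := notMem_vars_iff_forall_mem_support.mpr (hf i)
  replace hf₀' := notMem_vars_iff_forall_mem_support.mpr hf₀'
  replace hG g hg := notMem_vars_iff_forall_mem_support.mpr (hG g hg)
  rw [m.isGroebnerBasis_iff, m.isGroebnerBasis_iff, Set.singleton_union, Set.singleton_union,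
    Set.image_insert_eq, leadingTerm_X_none_add horder hf₀',
    span_leadingTerm_span_insert_X_none_add horder hf₀' hf]
  constructor
  · rintro ⟨hGJ, hspan⟩
    refine ⟨Set.insert_subset (Ideal.subset_span (Set.mem_insert _ _))
      (hGJ.trans (Ideal.span_mono (Set.subset_insert _ _))), ?_⟩
    rw [Ideal.span_insert, Ideal.span_insert, hspan]
  · rintro ⟨hGI, hspan⟩
    have hGJ : G ⊆ Ideal.span (Set.range f) := fun g hg =>
      mem_span_of_mem_span_insert_X_add hf₀' (hG g hg) (Set.forall_mem_range.mpr hf)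
        (hGI (Set.mem_insert_of_mem _ hg))
    refine ⟨hGJ, le_antisymm ?_ (Ideal.span_mono (Set.image_mono hGJ))⟩
    refine span_leadingTerm_le_of_subset_span_insert_X_none hf hG ?_
    rw [← hspan]
    exact (Set.subset_insert _ _).trans Ideal.subset_span
end

section
/- Let I ⊆ K[y_1,...,y_m, x_1,...,x_n] be the ideal generated by polynomials g_1,...,g_s ∈ K[x] together with H_i = y_i − h_i, h_i ∈ K[x], for i = 1,...,m. Let G be the reduced Gröbner basis of J = ⟨g_1,...,g_s⟩ ⊆ K[x] with respect to some monomial order. Then I is a binomial ideal if and only if J is a binomial ideal and for every i = 1,...,m the remainder Rem(h_i, G) has at most one term. -/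
/-!
Since `hᵢ ≡ rᵢ` modulo `J`, the ideal `I` equals `J + ⟨yᵢ - rᵢ⟩`. If `J` is binomial and every
`rᵢ` is a monomial, the binomial generators of `J` together with the `yᵢ - rᵢ` generate `I`.
Conversely, substituting `yᵢ ↦ rᵢ` maps `I` onto `J`, and maps binomials to binomials once every
`rᵢ` is known to be a monomial. That is the heart of the matter: a binomial ideal is, as a
`K`-vector space, spanned by binomials, and Gaussian elimination shows that every element `f` of it
is a combination of binomials of the ideal supported inside `supp f`. For `f = yᵢ - rᵢ` this gives
a binomial `v ∈ I` containing `yᵢ` with `supp v ⊆ supp f`; cancelling `yᵢ` between `f` and `v`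
leaves an element of `J` supported in `supp rᵢ`. No monomial of a remainder is divisible by a
leading monomial of the Gröbner basis, so that element is zero, and `f` is a multiple of `v`.
-/

open MvPolynomial
open scoped MonomialOrder

def MonomialOrder.IsReducedGroebnerBasis {σ : Type*} (m : MonomialOrder σ) {K : Type*}
    [Field K] (I : Ideal (MvPolynomial σ K)) (G : Set (MvPolynomial σ K)) : Prop :=
  m.IsGroebnerBasis I G ∧ (∀ g ∈ G, g.coeff (m.lexp g) = 1) ∧
    ∀ g ∈ G, ∀ d ∈ g.support, ∀ g' ∈ G, g' ≠ g → ¬ m.lexp g' ≤ d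

def MonomialOrder.IsRemainder {σ : Type*} (m : MonomialOrder σ) {K : Type*} [Field K]
    (p : MvPolynomial σ K) (G : Set (MvPolynomial σ K)) (r : MvPolynomial σ K) : Prop :=
  p - r ∈ Ideal.span G ∧ ∀ d ∈ r.support, ∀ g ∈ G, g ≠ 0 → ¬ m.lexp g ≤ d

/-- An ideal is binomial if it admits a generating set consisting of polynomials with at
most two terms. -/
def IsBinomialIdeal {σ : Type*} {K : Type*} [Field K] (I : Ideal (MvPolynomial σ K)) : Prop :=
  ∃ B : Set (MvPolynomial σ K), I = Ideal.span B ∧ ∀ f ∈ B, f.support.card ≤ 2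

namespace MvPolynomial

variable {σ τ K : Type*}

section CommSemiring

variable [CommSemiring K]

theorem card_support_monomial_le (d : σ →₀ ℕ) (c : K) : (monomial d c).support.card ≤ 1 :=
  (Finset.card_le_card support_monomial_subset).trans (Finset.card_singleton d).le

theorem card_support_mul_le (p q : MvPolynomial σ K) :
    (p * q).support.card ≤ p.support.card * q.support.card := by
  classical
  exact (Finset.card_le_card (support_mul p q)).trans Finset.card_add_le

theorem card_support_aeval_le {φ : σ → MvPolynomial τ K} (hφ : ∀ i, (φ i).support.card ≤ 1)
    (p : MvPolynomial σ K) : (aeval φ p).support.card ≤ p.support.card := by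
  classical
  let terms : Submonoid (MvPolynomial τ K) :=
    { carrier := {p | p.support.card ≤ 1}
      mul_mem' := fun ha hb => (card_support_mul_le _ _).trans (Left.mul_le_one ha hb)
      one_mem' := card_support_monomial_le 0 1 }
  have h_term : ∀ (d : σ →₀ ℕ) (c : K), aeval φ (monomial d c) ∈ terms := fun d c => by
    rw [aeval_monomial]
    exact terms.mul_mem (card_support_monomial_le 0 c)
      (terms.prod_mem fun i _ => terms.pow_mem (hφ i) _)
  conv_lhs => rw [p.as_sum, map_sum]
  calc _ ≤ ∑ d ∈ p.support, (aeval φ (monomial d (p.coeff d))).support.card :=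
        (Finset.card_le_card support_sum).trans Finset.card_biUnion_le
    _ ≤ ∑ _d ∈ p.support, 1 := Finset.sum_le_sum fun d _ => h_term d _
    _ = p.support.card := by simp

theorem card_support_rename_of_injective {f : σ → τ} (hf : Function.Injective f)
    (p : MvPolynomial σ K) : (rename f p).support.card = p.support.card := by
  classical
  rw [support_rename_of_injective hf]
  exact Finset.card_image_of_injective _ (Finsupp.mapDomain_injective hf)

theorem exists_rename_eq_of_support_subset {f : σ → τ} (hf : Function.Injective f)
    {w : MvPolynomial τ K} {r : MvPolynomial σ K} (h : w.support ⊆ (rename f r).support) :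
    ∃ u, rename f u = w ∧ u.support ⊆ r.support := by
  classical
  obtain ⟨u, rfl⟩ := exists_rename_eq_of_vars_subset_range w f hf fun j hj => by
    obtain ⟨d, hd, hjd⟩ := (mem_vars_iff_mem_support j).1 hj
    obtain ⟨k, -, rfl⟩ := mem_vars_rename f r ((mem_vars_iff_mem_support j).2 ⟨d, h hd, hjd⟩)
    exact ⟨k, rfl⟩
  refine ⟨u, rfl, ?_⟩
  rw [support_rename_of_injective hf, support_rename_of_injective hf] at h
  exact (Finset.image_subset_image_iff (Finsupp.mapDomain_injective hf)).1 h

theorem coeff_single_inl_rename_inr (i : σ) (p : MvPolynomial τ K) :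
    coeff (Finsupp.single (Sum.inl i) 1) (rename Sum.inr p) = 0 := by
  by_contra hc
  obtain ⟨e, he, -⟩ := coeff_rename_ne_zero _ _ _ hc
  have := Finsupp.mapDomain_of_notMem_range (f := Sum.inr) e (Sum.inl i) (by simp)
  rw [he, Finsupp.single_eq_same] at this
  exact one_ne_zero this

theorem mem_restrictSupport_compl_iff {v : MvPolynomial σ K} {T : Set (σ →₀ ℕ)} :
    v ∈ restrictSupport K Tᶜ ↔ ∀ μ ∈ T, coeff μ v = 0 := by
  rw [mem_restrictSupport_iff, Set.subset_compl_comm]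
  simp [Set.subset_def]

theorem mem_restrictSupport_compl_singleton_iff {v : MvPolynomial σ K} {μ : σ →₀ ℕ} :
    v ∈ restrictSupport K {μ}ᶜ ↔ coeff μ v = 0 := by
  simp [mem_restrictSupport_compl_iff]

end CommSemiring

section CommRing

variable [CommRing K]

theorem card_support_sub_smul_le_two {v b : MvPolynomial σ K} {μ : σ →₀ ℕ}
    (hv : v.support.card ≤ 2) (hb : b.support.card ≤ 2) (hμv : μ ∈ v.support)
    (hμb : μ ∈ b.support) (a : K) (h : coeff μ (v - a • b) = 0) :
    (v - a • b).support.card ≤ 2 := by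
  classical
  have h_sub : (v - a • b).support ⊆ v.support.erase μ ∪ b.support.erase μ := by
    intro d hd
    have hdμ : d ≠ μ := by rintro rfl; exact mem_support_iff.1 hd h
    rcases Finset.mem_union.1 (support_sub σ v (a • b) hd) with hd | hd
    · exact Finset.mem_union_left _ (Finset.mem_erase.2 ⟨hdμ, hd⟩)
    · exact Finset.mem_union_right _ (Finset.mem_erase.2 ⟨hdμ, support_smul hd⟩)
  calc _ ≤ (v.support.erase μ).card + (b.support.erase μ).card :=
        (Finset.card_le_card h_sub).trans (Finset.card_union_le _ _)
    _ ≤ 2 := by rw [Finset.card_erase_of_mem hμv, Finset.card_erase_of_mem hμb]; omega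

theorem support_X_inl_sub_rename_inr [Nontrivial K] [DecidableEq (σ ⊕ τ →₀ ℕ)] (i : σ)
    (p : MvPolynomial τ K) :
    (X (Sum.inl i) - rename Sum.inr p).support =
      insert (Finsupp.single (Sum.inl i) 1) (rename Sum.inr p).support := by
  classical
  ext d
  rw [Finset.mem_insert, mem_support_iff, mem_support_iff]
  by_cases hd : d = Finsupp.single (Sum.inl i) 1
  · simp [hd, coeff_single_inl_rename_inr]
  · rw [coeff_sub, coeff_X, if_neg (Ne.symm hd), zero_sub, neg_ne_zero]
    exact (or_iff_right hd).symm

end CommRing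

end MvPolynomial

section BinomialIdeal

variable {σ τ K : Type*} [Field K]

theorem IsBinomialIdeal.sup {I J : Ideal (MvPolynomial σ K)} (hI : IsBinomialIdeal I)
    (hJ : IsBinomialIdeal J) : IsBinomialIdeal (I ⊔ J) := by
  obtain ⟨B, rfl, hB⟩ := hI
  obtain ⟨C, rfl, hC⟩ := hJ
  exact ⟨B ∪ C, (Ideal.span_union B C).symm, fun f hf => hf.elim (hB f) (hC f)⟩

theorem IsBinomialIdeal.map_aeval {I : Ideal (MvPolynomial σ K)} (hI : IsBinomialIdeal I)
    {φ : σ → MvPolynomial τ K} (hφ : ∀ i, (φ i).support.card ≤ 1) :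
    IsBinomialIdeal (I.map (aeval φ)) := by
  obtain ⟨B, rfl, hB⟩ := hI
  refine ⟨aeval φ '' B, Ideal.map_span _ _, ?_⟩
  rintro _ ⟨b, hb, rfl⟩
  exact (card_support_aeval_le hφ b).trans (hB b hb)

theorem IsBinomialIdeal.map_rename {I : Ideal (MvPolynomial σ K)} (hI : IsBinomialIdeal I)
    (f : σ → τ) : IsBinomialIdeal (I.map (rename f)) := by
  rw [rename_eq_aeval]
  exact hI.map_aeval fun _ => card_support_monomial_le _ _

def IsBinomialSubspace (V : Submodule K (MvPolynomial σ K)) : Prop :=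
  V ≤ Submodule.span K {v | v ∈ V ∧ v.support.card ≤ 2}

theorem isBinomialSubspace_span {B : Set (MvPolynomial σ K)}
    (hB : ∀ b ∈ B, b.support.card ≤ 2) : IsBinomialSubspace (Submodule.span K B) :=
  Submodule.span_mono fun b hb => ⟨Submodule.subset_span hb, hB b hb⟩

theorem IsBinomialIdeal.isBinomialSubspace {I : Ideal (MvPolynomial σ K)}
    (hI : IsBinomialIdeal I) : IsBinomialSubspace (I.restrictScalars K) := by
  obtain ⟨B, rfl, hB⟩ := hI
  have h_monomials : Submodule.span K (Set.range fun d : σ →₀ ℕ => monomial d (1 : K)) = ⊤ := by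
    rw [← coe_basisMonomials]
    exact (basisMonomials σ K).span_eq
  rw [Ideal.span, ← Submodule.span_smul_of_span_eq_top h_monomials]
  refine isBinomialSubspace_span ?_
  rintro _ ⟨_, ⟨d, rfl⟩, b, hb, rfl⟩
  calc _ ≤ (monomial d (1 : K)).support.card * b.support.card := card_support_mul_le _ _
    _ ≤ 1 * 2 := Nat.mul_le_mul (card_support_monomial_le d 1) (hB b hb)

theorem IsBinomialSubspace.inf_restrictSupport_compl_singleton
    {V : Submodule K (MvPolynomial σ K)} (hV : IsBinomialSubspace V) (μ : σ →₀ ℕ) :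
    IsBinomialSubspace (V ⊓ restrictSupport K {μ}ᶜ) := by
  by_cases h : ∃ b₀ ∈ V, b₀.support.card ≤ 2 ∧ coeff μ b₀ ≠ 0
  · obtain ⟨b₀, hb₀V, hb₀, hμb₀⟩ := h
    -- Gaussian elimination of the coordinate `μ` against the pivot `b₀`
    let P : MvPolynomial σ K →ₗ[K] MvPolynomial σ K :=
      LinearMap.id - (lcoeff K μ).smulRight ((coeff μ b₀)⁻¹ • b₀)
    have hP : ∀ v, P v = v - (coeff μ v / coeff μ b₀) • b₀ := fun v => by
      simp [P, div_eq_mul_inv, mul_smul]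
    have hPμ : ∀ v, coeff μ (P v) = 0 := fun v => by
      rw [hP, coeff_sub, coeff_smul, smul_eq_mul, div_mul_cancel₀ _ hμb₀, sub_self]
    rintro f ⟨hfV, hfμ⟩
    have hPf : P f = f := by
      rw [hP, mem_restrictSupport_compl_singleton_iff.1 hfμ, zero_div, zero_smul, sub_zero]
    have h_map := Submodule.mem_map_of_mem (f := P) (hV hfV)
    rw [Submodule.map_span, hPf] at h_map
    refine Submodule.span_mono ?_ h_map
    rintro _ ⟨v, ⟨hvV, hv⟩, rfl⟩
    refine ⟨⟨?_, mem_restrictSupport_compl_singleton_iff.2 (hPμ v)⟩, ?_⟩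
    · rw [hP]
      exact sub_mem hvV (V.smul_mem _ hb₀V)
    · by_cases hμv : coeff μ v = 0
      · rwa [hP, hμv, zero_div, zero_smul, sub_zero]
      · have hPvμ := hPμ v
        rw [hP] at hPvμ ⊢
        exact card_support_sub_smul_le_two hv hb₀ (mem_support_iff.2 hμv)
          (mem_support_iff.2 hμb₀) _ hPvμ
  · push Not at h
    rintro f ⟨hfV, -⟩
    refine Submodule.span_mono ?_ (hV hfV)
    rintro v ⟨hvV, hv⟩
    exact ⟨⟨hvV, mem_restrictSupport_compl_singleton_iff.2 (h v hvV hv)⟩, hv⟩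

theorem IsBinomialSubspace.inf_restrictSupport_compl {V : Submodule K (MvPolynomial σ K)}
    (hV : IsBinomialSubspace V) (T : Finset (σ →₀ ℕ)) :
    IsBinomialSubspace (V ⊓ restrictSupport K (↑T)ᶜ) := by
  classical
  induction T using Finset.induction_on with
  | empty =>
    convert hV
    exact inf_eq_left.2 fun v _ => mem_restrictSupport_compl_iff.2 (by simp)
  | insert μ T _ ih =>
    convert ih.inf_restrictSupport_compl_singleton μ using 1
    ext v
    simp only [Submodule.mem_inf, mem_restrictSupport_compl_iff, Finset.coe_insert,
      Set.forall_mem_insert, Finset.mem_coe, Set.mem_singleton_iff, forall_eq]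
    tauto

theorem IsBinomialSubspace.exists_binomial_mem_support {V : Submodule K (MvPolynomial σ K)}
    (hV : IsBinomialSubspace V) {f : MvPolynomial σ K} (hf : f ∈ V) {μ : σ →₀ ℕ}
    (hμ : μ ∈ f.support) :
    ∃ v ∈ V, v.support.card ≤ 2 ∧ v.support ⊆ f.support ∧ μ ∈ v.support := by
  classical
  obtain ⟨B, hBV, hfB⟩ := Submodule.mem_span_finite_of_mem_span (hV hf)
  set U := B.biUnion support
  have hBU : Submodule.span K (B : Set (MvPolynomial σ K)) ≤ restrictSupport K U :=
    Submodule.span_le.2 fun b hb => (mem_restrictSupport_iff K).2 <| by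
      simpa using Finset.subset_biUnion_of_mem support hb
  set W := Submodule.span K (B : Set (MvPolynomial σ K)) ⊓ restrictSupport K (↑(U \ f.support))ᶜ
  have hfW : f ∈ W := ⟨hfB, (mem_restrictSupport_iff K).2 fun d hd => by simp_all⟩
  have h_supp : ∀ v ∈ W, v.support ⊆ f.support := fun v ⟨hvB, hvU⟩ d hd => by
    have := (mem_restrictSupport_iff K).1 (hBU hvB) hd
    have := (mem_restrictSupport_iff K).1 hvU hd
    simp_all
  by_contra h_none
  push Not at h_none
  have h_ker : Submodule.span K {v | v ∈ W ∧ v.support.card ≤ 2} ≤ LinearMap.ker (lcoeff K μ) :=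
    Submodule.span_le.2 fun v ⟨hvW, hv⟩ => notMem_support_iff.1 <|
      h_none v (Submodule.span_le.2 (fun b hb => (hBV hb).1) hvW.1) hv (h_supp v hvW)
  have hW : IsBinomialSubspace W :=
    (isBinomialSubspace_span fun b hb => (hBV hb).2).inf_restrictSupport_compl _
  exact mem_support_iff.1 hμ (h_ker (hW hfW))

end BinomialIdeal

theorem MonomialOrder.IsGroebnerBasis.eq_zero_of_mem_of_forall_not_lexp_le {σ K : Type*}
    [Field K] {m : MonomialOrder σ} {J : Ideal (MvPolynomial σ K)} {G : Set (MvPolynomial σ K)}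
    (hG : m.IsGroebnerBasis J G) {u : MvPolynomial σ K} (hu : u ∈ J)
    (h : ∀ d ∈ u.support, ∀ g ∈ G, g ≠ 0 → ¬ m.lexp g ≤ d) : u = 0 := by
  classical
  by_contra hu0
  have h_lead : Ideal.span (m.leadTerm '' G) ≤
      Ideal.span ((fun d => monomial d (1 : K)) '' (m.lexp '' (G \ {0}))) := by
    refine Ideal.span_le.2 ?_
    rintro _ ⟨g, hg, rfl⟩
    by_cases hg0 : g = 0
    · simp [hg0, MonomialOrder.leadTerm]
    · have : m.leadTerm g = C (g.coeff (m.lexp g)) * monomial (m.lexp g) 1 := by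
        rw [C_mul_monomial, mul_one]; rfl
      rw [this]
      exact Ideal.mul_mem_left _ _ (Ideal.subset_span ⟨_, ⟨g, ⟨hg, hg0⟩, rfl⟩, rfl⟩)
  have hu_lex : m.lexp u ∈ u.support := (m.degree_mem_support_iff u).2 hu0
  have hu_lead : m.lexp u ∈ (m.leadTerm u).support := by
    rw [MonomialOrder.leadTerm, mem_support_iff, coeff_monomial, if_pos rfl]
    exact mem_support_iff.1 hu_lex
  obtain ⟨_, ⟨g, ⟨hg, hg0⟩, rfl⟩, hle⟩ := mem_ideal_span_monomial_image.1
    (h_lead (hG.2 ▸ Ideal.subset_span ⟨u, hu, rfl⟩)) _ hu_lead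
  exact h _ hu_lex g hg hg0 hle

section Graph

variable {σ τ K : Type*} [Field K]

/-- The ideal `J + ⟨yᵢ - rᵢ⟩` of `K[y, x]`, where `yᵢ = X (Sum.inl i)`. -/
noncomputable def graphIdeal (J : Ideal (MvPolynomial τ K)) (r : σ → MvPolynomial τ K) :
    Ideal (MvPolynomial (σ ⊕ τ) K) :=
  J.map (rename Sum.inr) ⊔ Ideal.span (Set.range fun i => X (Sum.inl i) - rename Sum.inr (r i))

theorem span_range_union_eq_graphIdeal {ι : Type*} (g : ι → MvPolynomial τ K)
    (h : σ → MvPolynomial τ K) :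
    Ideal.span ((Set.range fun i => rename (Sum.inr : τ → σ ⊕ τ) (g i)) ∪
      Set.range fun i => X (Sum.inl i) - rename Sum.inr (h i)) =
      graphIdeal (Ideal.span (Set.range g)) h := by
  rw [Ideal.span_union, graphIdeal, Ideal.map_span, ← Set.range_comp]
  rfl

theorem X_sub_rename_mem_graphIdeal (J : Ideal (MvPolynomial τ K)) (r : σ → MvPolynomial τ K)
    (i : σ) : X (Sum.inl i) - rename Sum.inr (r i) ∈ graphIdeal J r :=
  Ideal.mem_sup_right (Ideal.subset_span ⟨i, rfl⟩)

theorem graphIdeal_le_of_sub_mem {J : Ideal (MvPolynomial τ K)} {h r : σ → MvPolynomial τ K}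
    (hhr : ∀ i, h i - r i ∈ J) : graphIdeal J h ≤ graphIdeal J r := by
  refine sup_le le_sup_left (Ideal.span_le.2 ?_)
  rintro _ ⟨i, rfl⟩
  show X (Sum.inl i) - rename Sum.inr (h i) ∈ graphIdeal J r
  have : X (Sum.inl i) - rename Sum.inr (h i) =
      (X (Sum.inl i) - rename Sum.inr (r i)) - rename Sum.inr (h i - r i) := by
    rw [map_sub]; ring
  rw [this]
  exact sub_mem (X_sub_rename_mem_graphIdeal J r i)
    (Ideal.mem_sup_left (Ideal.mem_map_of_mem _ (hhr i)))

theorem graphIdeal_eq_of_sub_mem {J : Ideal (MvPolynomial τ K)} {h r : σ → MvPolynomial τ K}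
    (hhr : ∀ i, h i - r i ∈ J) : graphIdeal J h = graphIdeal J r :=
  le_antisymm (graphIdeal_le_of_sub_mem hhr)
    (graphIdeal_le_of_sub_mem fun i => neg_sub (h i) (r i) ▸ neg_mem (hhr i))

theorem aeval_elim_rename_inr (r : σ → MvPolynomial τ K) (p : MvPolynomial τ K) :
    aeval (Sum.elim r X) (rename Sum.inr p) = p := by
  rw [aeval_rename, Sum.elim_comp_inr, aeval_X_left_apply]

theorem map_aeval_elim_graphIdeal (J : Ideal (MvPolynomial τ K)) (r : σ → MvPolynomial τ K) :
    (graphIdeal J r).map (aeval (Sum.elim r X)) = J := by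
  refine le_antisymm (Ideal.map_le_iff_le_comap.2 (sup_le ?_ ?_)) fun p hp => ?_
  · refine Ideal.map_le_iff_le_comap.2 fun p hp => ?_
    rwa [Ideal.mem_comap, Ideal.mem_comap, aeval_elim_rename_inr]
  · refine Ideal.span_le.2 ?_
    rintro _ ⟨i, rfl⟩
    rw [SetLike.mem_coe, Ideal.mem_comap, map_sub, aeval_elim_rename_inr, aeval_X,
      Sum.elim_inl, sub_self]
    exact J.zero_mem
  · rw [← aeval_elim_rename_inr r p]
    exact Ideal.mem_map_of_mem _ (Ideal.mem_sup_left (Ideal.mem_map_of_mem _ hp))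

theorem comap_rename_inr_graphIdeal (J : Ideal (MvPolynomial τ K)) (r : σ → MvPolynomial τ K) :
    (graphIdeal J r).comap (rename Sum.inr) = J := by
  refine le_antisymm (fun p hp => ?_) fun p hp => Ideal.mem_sup_left (Ideal.mem_map_of_mem _ hp)
  rw [← map_aeval_elim_graphIdeal J r, ← aeval_elim_rename_inr r p]
  exact Ideal.mem_map_of_mem _ hp

end Graph

theorem card_support_le_one_of_X_sub_rename_mem {σ τ K : Type*} [Field K]
    {I : Ideal (MvPolynomial (σ ⊕ τ) K)} (hI : IsBinomialIdeal I) {r : MvPolynomial τ K} {i : σ}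
    (hXr : X (Sum.inl i) - rename Sum.inr r ∈ I)
    (hr : ∀ u, rename Sum.inr u ∈ I → u.support ⊆ r.support → u = 0) :
    r.support.card ≤ 1 := by
  classical
  set f := X (Sum.inl i) - rename Sum.inr r
  set μ : σ ⊕ τ →₀ ℕ := Finsupp.single (Sum.inl i) 1
  have hμr : coeff μ (rename Sum.inr r) = 0 := coeff_single_inl_rename_inr i r
  have hf_supp : f.support = insert μ (rename Sum.inr r).support :=
    support_X_inl_sub_rename_inr i r
  obtain ⟨v, hvI, hv, hvf, hμv⟩ :=
    hI.isBinomialSubspace.exists_binomial_mem_support hXr (hf_supp ▸ Finset.mem_insert_self _ _)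
  set w := f - (coeff μ v)⁻¹ • v
  have hw_supp : w.support ⊆ (rename Sum.inr r).support := by
    intro d hd
    have hdμ : d ≠ μ := by
      rintro rfl
      refine mem_support_iff.1 hd ?_
      rw [coeff_sub, coeff_smul, smul_eq_mul, inv_mul_cancel₀ (mem_support_iff.1 hμv)]
      simp [f, hμr, μ]
    have hdf : d ∈ f.support := by
      rcases Finset.mem_union.1 (support_sub _ _ _ hd) with hd | hd
      exacts [hd, hvf (support_smul hd)]
    rw [hf_supp] at hdf
    exact (Finset.mem_insert.1 hdf).resolve_left hdμ
  obtain ⟨u, hu, hur⟩ := exists_rename_eq_of_support_subset Sum.inr_injective hw_supp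
  have hw : w = 0 := by
    rw [← hu, hr u (hu ▸ sub_mem hXr (Submodule.smul_of_tower_mem I _ hvI)) hur, map_zero]
  suffices r.support.card + 1 ≤ 2 by omega
  calc r.support.card + 1 = f.support.card := by
        rw [hf_supp, Finset.card_insert_of_notMem (notMem_support_iff.2 hμr),
          card_support_rename_of_injective Sum.inr_injective]
    _ = ((coeff μ v)⁻¹ • v).support.card := by rw [sub_eq_zero.1 hw]
    _ ≤ 2 := (Finset.card_le_card support_smul).trans hv

/-- Theorem `Binomiality and Intermediates` (algebraic form).  The big ring
`K[y₁,…,y_q,x₁,…,xₙ]` is `MvPolynomial (Fin q ⊕ Fin n) K` with `yᵢ = X (Sum.inl i)`,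
`xⱼ = X (Sum.inr j)`; `K[x]` embeds via `rename Sum.inr`.  Let
`I = ⟨g₁,…,g_s, y₁ − h₁, …, y_q − h_q⟩` with `gᵢ, hᵢ ∈ K[x]`, let `G` be the reduced
Gröbner basis of `J = ⟨g₁,…,g_s⟩ ⊆ K[x]` with respect to a monomial order `m`, and let
`rᵢ = Rem(hᵢ, G)`.  Then `I` is binomial iff `J` is binomial and every `rᵢ` has at most one
term. -/
theorem binomial_iff_core_binomial_and_remainders
    {q n s : ℕ} {K : Type*} [Field K]
    (m : MonomialOrder (Fin n))
    (g : Fin s → MvPolynomial (Fin n) K) (h : Fin q → MvPolynomial (Fin n) K)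
    (G : Set (MvPolynomial (Fin n) K))
    (hG : m.IsReducedGroebnerBasis (Ideal.span (Set.range g)) G)
    (r : Fin q → MvPolynomial (Fin n) K)
    (hr : ∀ i, m.IsRemainder (h i) G (r i))
    (I : Ideal (MvPolynomial (Fin q ⊕ Fin n) K))
    (hI : I = Ideal.span
      ((Set.range fun i => rename (Sum.inr : Fin n → Fin q ⊕ Fin n) (g i)) ∪
        (Set.range fun i : Fin q =>
          X (Sum.inl i) - rename (Sum.inr : Fin n → Fin q ⊕ Fin n) (h i)))) :
    IsBinomialIdeal I ↔
      (IsBinomialIdeal (Ideal.span (Set.range g)) ∧ ∀ i, (r i).support.card ≤ 1) := by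
  set J := Ideal.span (Set.range g)
  have hhr : ∀ i, h i - r i ∈ J := fun i => Ideal.span_le.2 hG.1.1 (hr i).1
  rw [hI, span_range_union_eq_graphIdeal, graphIdeal_eq_of_sub_mem hhr]
  constructor
  · intro hI_bin
    have hr_card : ∀ i, (r i).support.card ≤ 1 := fun i =>
      card_support_le_one_of_X_sub_rename_mem hI_bin (X_sub_rename_mem_graphIdeal J r i)
        fun u hu hur => hG.1.eq_zero_of_mem_of_forall_not_lexp_le
          (comap_rename_inr_graphIdeal J r ▸ hu) fun d hd => (hr i).2 d (hur hd)
    refine ⟨?_, hr_card⟩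
    rw [← map_aeval_elim_graphIdeal J r]
    exact hI_bin.map_aeval (Sum.rec hr_card fun _ => card_support_monomial_le _ _)
  · rintro ⟨hJ_bin, hr_card⟩
    refine (hJ_bin.map_rename _).sup ⟨_, rfl, ?_⟩
    rintro _ ⟨i, rfl⟩
    calc _ ≤ (X (Sum.inl i) : MvPolynomial _ K).support.card +
          (rename Sum.inr (r i)).support.card :=
        (Finset.card_le_card (support_sub _ _ _)).trans (Finset.card_union_le _ _)
      _ ≤ 1 + 1 := add_le_add (card_support_monomial_le _ _)
          ((card_support_rename_of_injective Sum.inr_injective _).trans_le (hr_card i))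
end
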